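/- In the two-sided replicating character string model, the sequence ((V_ℓ, Ȳ_ℓ), ℓ ∈ ℤ) is strictly stationary under the conditional probability measure P_0(·) := P(· | Z_0 ∈ {M,I}), where V_ℓ = (Z_{ξ(ℓ)}, ξ_ℓ − ξ_{ℓ−1}) and Ȳ_ℓ = X̄_{ξ(ℓ)}. -/

import Mathlib

/-!
Everything is a measurable function of the path `(X, Z)`, whose law is invariant under shifting
`X` by `m` and `Z` by `n` separately (independence and stationarity of each factor); `ξ` and `X̄`
are recovered from `Z` by ranking positions with signed counts. Split the Palm event
`{Z₀ ∈ {M, I}}` according to `n = ξ₁` and the number `m` of M/D-positions in `(0, n]`. Shifting `Z`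
by `n` and `X` by `m` maps this piece onto the piece `{ξ₋₁ = -n, m M/D-positions in (-n, 0]}`
and advances the observed sequence `(V_ℓ, Ȳ_ℓ)` by one index; summing over `(n, m)` gives
invariance under the one-step shift.
-/

open MeasureTheory ProbabilityTheory Filter Set

/-- The absolute regularity (β-mixing) coefficient between two sub-σ-fields. -/
noncomputable def betaMix {Ω : Type*} {mΩ : MeasurableSpace Ω} (P : Measure Ω)
    (𝓐 𝓑 : MeasurableSpace Ω) : ℝ :=
  sSup { x : ℝ | ∃ (I J : ℕ) (f : Fin I → Set Ω) (g : Fin J → Set Ω),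
    (∀ i, MeasurableSet[𝓐] (f i)) ∧ (∀ j, MeasurableSet[𝓑] (g j)) ∧
    Pairwise (Function.onFun Disjoint f) ∧ (⋃ i, f i) = Set.univ ∧
    Pairwise (Function.onFun Disjoint g) ∧ (⋃ j, g j) = Set.univ ∧
    x = (1/2) * ∑ i, ∑ j,
      |(P (f i ∩ g j)).toReal - (P (f i)).toReal * (P (g j)).toReal| }

/-- The strong mixing (α) coefficient between two sub-σ-fields. -/
noncomputable def alphaMix {Ω : Type*} {mΩ : MeasurableSpace Ω} (P : Measure Ω)
    (𝓐 𝓑 : MeasurableSpace Ω) : ℝ :=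
  sSup { x : ℝ | ∃ (A B : Set Ω), MeasurableSet[𝓐] A ∧ MeasurableSet[𝓑] B ∧
    x = |(P (A ∩ B)).toReal - (P A).toReal * (P B).toReal| }

/-- β mixing coefficient of a two-sided sequence with gap `n`. -/
noncomputable def betaSeq {Ω E : Type*} {mΩ : MeasurableSpace Ω} [MeasurableSpace E]
    (X : ℤ → Ω → E) (n : ℕ) (P : Measure Ω) : ℝ :=
  betaMix P (⨆ k : {k : ℤ // k ≤ 0}, MeasurableSpace.comap (X k) inferInstance)
            (⨆ k : {k : ℤ // (n : ℤ) ≤ k}, MeasurableSpace.comap (X k) inferInstance)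

/-- α mixing coefficient of a two-sided sequence with gap `n`. -/
noncomputable def alphaSeq {Ω E : Type*} {mΩ : MeasurableSpace Ω} [MeasurableSpace E]
    (X : ℤ → Ω → E) (n : ℕ) (P : Measure Ω) : ℝ :=
  alphaMix P (⨆ k : {k : ℤ // k ≤ 0}, MeasurableSpace.comap (X k) inferInstance)
             (⨆ k : {k : ℤ // (n : ℤ) ≤ k}, MeasurableSpace.comap (X k) inferInstance)

/-- Strict stationarity of a two-sided sequence. -/
def IsStationarySeq {Ω E : Type*} {mΩ : MeasurableSpace Ω} [MeasurableSpace E]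
    (P : Measure Ω) (X : ℤ → Ω → E) : Prop :=
  ∀ j : ℤ, P.map (fun ω => fun k : ℤ => X (k + j) ω) = P.map (fun ω => fun k : ℤ => X k ω)

/-- Mutation / Insertion / Deletion symbols. -/
inductive MID | M | I | D
deriving DecidableEq

instance : MeasurableSpace MID := ⊤


section HitCount

variable (p : ℤ → Prop)

open Classical in
noncomputable def hitCount (a b : ℤ) : ℕ := ((Finset.Ioc a b).filter p).card

/-- Hits are ranked so that for an enumeration `e` of them with `e 0 ≤ 0 < e 1`, the hit `e k`
has rank `k` (`hitRank_enum`). -/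
noncomputable def hitRank (j : ℤ) : ℤ := hitCount p 0 j - hitCount p j 0

theorem hitCount_of_le {a b : ℤ} (h : b ≤ a) : hitCount p a b = 0 := by
  simp [hitCount, Finset.Ioc_eq_empty_of_le h]

theorem hitCount_add {a b c : ℤ} (hab : a ≤ b) (hbc : b ≤ c) :
    hitCount p a c = hitCount p a b + hitCount p b c := by
  classical
  rw [hitCount, hitCount, hitCount, ← Finset.Ioc_union_Ioc_eq_Ioc hab hbc, Finset.filter_union,
    Finset.card_union_of_disjoint
      (Finset.disjoint_filter_filter (Finset.Ioc_disjoint_Ioc_of_le le_rfl))]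

theorem hitCount_pos {a b : ℤ} (hb : p b) (hab : a < b) : 0 < hitCount p a b := by
  classical
  exact Finset.card_pos.2 ⟨b, by simp [hab, hb]⟩

theorem hitCount_comp_add_right (n a b : ℤ) :
    hitCount (fun i => p (i + n)) a b = hitCount p (a + n) (b + n) := by
  classical
  rw [hitCount, hitCount, ← Finset.map_add_right_Ioc, Finset.filter_map, Finset.card_map]
  rfl

theorem hitRank_zero : hitRank p 0 = 0 := by
  simp [hitRank, hitCount_of_le]

theorem hitRank_sub_hitRank {a b : ℤ} (hab : a ≤ b) :
    hitRank p b - hitRank p a = hitCount p a b := by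
  unfold hitRank
  rcases le_total 0 a with ha | ha
  · rw [hitCount_add p ha hab, hitCount_of_le p ha, hitCount_of_le p (ha.trans hab)]
    push_cast; ring
  rcases le_total 0 b with hb | hb
  · rw [hitCount_add p ha hb, hitCount_of_le p ha, hitCount_of_le p hb]
    push_cast; ring
  · rw [hitCount_add p hab hb, hitCount_of_le p ha, hitCount_of_le p hb]
    push_cast; ring

theorem hitRank_comp_add_right (n j : ℤ) :
    hitRank (fun i => p (i + n)) j = hitRank p (j + n) - hitRank p n := by
  rcases le_total 0 j with hj | hj
  · rw [hitRank_sub_hitRank p (by omega : n ≤ j + n)]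
    simp [hitRank, hitCount_comp_add_right, hitCount_of_le _ hj]
  · have h := hitRank_sub_hitRank p (by omega : j + n ≤ n)
    simp only [hitRank, hitCount_comp_add_right, hitCount_of_le _ hj, zero_add] at h ⊢
    omega

theorem hitRank_lt_hitRank {i j : ℤ} (hj : p j) (hij : i < j) : hitRank p i < hitRank p j := by
  have := hitCount_pos p hj hij
  have := hitRank_sub_hitRank p hij.le
  omega

theorem hitRank_injOn : Set.InjOn (hitRank p) {j | p j} := by
  intro i hi j hj h
  rcases lt_trichotomy i j with hij | rfl | hij
  · exact absurd h (hitRank_lt_hitRank p hj hij).ne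
  · rfl
  · exact absurd h (hitRank_lt_hitRank p hi hij).ne'

variable {p} {e : ℤ → ℤ}

theorem hitCount_enum (he : StrictMono e) (hp : ∀ j, p j ↔ j ∈ Set.range e) (k k' : ℤ) :
    hitCount p (e k) (e k') = (k' - k).toNat := by
  classical
  have : (Finset.Ioc (e k) (e k')).filter p = (Finset.Ioc k k').map ⟨e, he.injective⟩ := by
    ext j
    simp only [Finset.mem_filter, Finset.mem_Ioc, hp, Set.mem_range, Finset.mem_map,
      Function.Embedding.coeFn_mk]
    constructor
    · rintro ⟨⟨h₁, h₂⟩, t, rfl⟩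
      exact ⟨t, ⟨he.lt_iff_lt.1 h₁, he.le_iff_le.1 h₂⟩, rfl⟩
    · rintro ⟨t, ⟨h₁, h₂⟩, rfl⟩
      exact ⟨⟨he h₁, he.monotone h₂⟩, t, rfl⟩
  rw [hitCount, this, Finset.card_map, Int.card_Ioc]

theorem hitRank_enum (he : StrictMono e) (he₀ : e 0 ≤ 0) (he₁ : 0 < e 1)
    (hp : ∀ j, p j ↔ j ∈ Set.range e) (k : ℤ) : hitRank p (e k) = k := by
  have h₀ : hitRank p (e 0) = 0 := by
    -- `(e 0, e 1]` holds the single hit `e 1`, which already lies in `(0, e 1]`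
    have h01 := hitCount_add p he₀ he₁.le
    have hpos := hitCount_pos p ((hp _).2 ⟨1, rfl⟩) he₁
    rw [hitCount_enum he hp] at h01
    have := hitRank_sub_hitRank p he₀
    rw [hitRank_zero] at this
    omega
  rcases le_total 0 k with hk | hk
  · have := hitRank_sub_hitRank p (he.monotone hk)
    rw [hitCount_enum he hp] at this
    omega
  · have := hitRank_sub_hitRank p (he.monotone hk)
    rw [hitCount_enum he hp] at this
    omega

open Classical in
noncomputable def hitEnum (p : ℤ → Prop) (ℓ : ℤ) : ℤ :=
  if h : ∃ j, p j ∧ hitRank p j = ℓ then h.choose else 0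

theorem hitEnum_eq {ℓ j : ℤ} (hj : p j) (hℓ : hitRank p j = ℓ) : hitEnum p ℓ = j := by
  have h : ∃ j, p j ∧ hitRank p j = ℓ := ⟨j, hj, hℓ⟩
  rw [hitEnum, dif_pos h]
  exact hitRank_injOn p h.choose_spec.1 hj (h.choose_spec.2.trans hℓ.symm)

theorem hitEnum_eq_iff {ℓ j : ℤ} :
    hitEnum p ℓ = j ↔ (p j ∧ hitRank p j = ℓ) ∨ (j = 0 ∧ ¬ ∃ i, p i ∧ hitRank p i = ℓ) := by
  by_cases h : ∃ i, p i ∧ hitRank p i = ℓ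
  · obtain ⟨i, hi, hiℓ⟩ := h
    rw [hitEnum_eq hi hiℓ]
    exact ⟨fun hij => Or.inl (hij ▸ ⟨hi, hiℓ⟩),
      fun hj => hj.elim (fun hj => hitRank_injOn p hi hj.1 (hiℓ.trans hj.2.symm))
        (fun hj => absurd ⟨i, hi, hiℓ⟩ hj.2)⟩
  · rw [hitEnum, dif_neg h]
    exact ⟨fun hj => Or.inr ⟨hj.symm, h⟩,
      fun hj => hj.elim (fun hj => absurd ⟨j, hj⟩ h) (fun hj => hj.1.symm)⟩

theorem hitEnum_enum (he : StrictMono e) (he₀ : e 0 ≤ 0) (he₁ : 0 < e 1)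
    (hp : ∀ j, p j ↔ j ∈ Set.range e) (ℓ : ℤ) : hitEnum p ℓ = e ℓ :=
  hitEnum_eq ((hp _).2 ⟨ℓ, rfl⟩) (hitRank_enum he he₀ he₁ hp ℓ)

variable (p) in
def HitRankSurj : Prop := ∀ ℓ, ∃ j, p j ∧ hitRank p j = ℓ

theorem hitRankSurj_enum (he : StrictMono e) (he₀ : e 0 ≤ 0) (he₁ : 0 < e 1)
    (hp : ∀ j, p j ↔ j ∈ Set.range e) : HitRankSurj p :=
  fun ℓ => ⟨e ℓ, (hp _).2 ⟨ℓ, rfl⟩, hitRank_enum he he₀ he₁ hp ℓ⟩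

theorem hitRankSurj_comp_add_right (n : ℤ) :
    HitRankSurj (fun i => p (i + n)) ↔ HitRankSurj p := by
  simp only [HitRankSurj, hitRank_comp_add_right]
  constructor
  · intro h ℓ
    obtain ⟨j, hj, hjℓ⟩ := h (ℓ - hitRank p n)
    exact ⟨j + n, hj, by omega⟩
  · intro h ℓ
    obtain ⟨j, hj, hjℓ⟩ := h (ℓ + hitRank p n)
    exact ⟨j - n, by simpa using hj, by simp only [sub_add_cancel]; omega⟩

theorem hitEnum_comp_add_right (h : HitRankSurj p) (n ℓ : ℤ) :
    hitEnum (fun i => p (i + n)) ℓ = hitEnum p (ℓ + hitRank p n) - n := by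
  obtain ⟨j, hj, hjℓ⟩ := h (ℓ + hitRank p n)
  rw [hitEnum_eq hj hjℓ]
  refine hitEnum_eq (by simpa using hj) ?_
  rw [hitRank_comp_add_right, sub_add_cancel]
  omega

end HitCount

section Stationarity

def shiftSeq {β : Type*} (n : ℤ) (u : ℤ → β) : ℤ → β := fun k => u (k + n)

theorem shiftSeq_comp_shiftSeq {β : Type*} (a b : ℤ) :
    shiftSeq (β := β) a ∘ shiftSeq b = shiftSeq (a + b) := by
  funext u k
  simp [shiftSeq, add_assoc]

theorem measurable_shiftSeq {β : Type*} [MeasurableSpace β] (n : ℤ) :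
    Measurable (shiftSeq (β := β) n) :=
  measurable_pi_lambda _ fun k => measurable_pi_apply (k + n)

variable {Ω β : Type*} {mΩ : MeasurableSpace Ω} [MeasurableSpace β]

theorem isStationarySeq_iff_map_shiftSeq {P : Measure Ω} {Y : ℤ → Ω → β}
    (hY : ∀ k, Measurable (Y k)) :
    IsStationarySeq P Y ↔
      ∀ j, (P.map fun ω k => Y k ω).map (shiftSeq j) = P.map fun ω k => Y k ω := by
  rw [IsStationarySeq]
  refine forall_congr' fun j => ?_
  rw [Measure.map_map (measurable_shiftSeq j) (measurable_pi_lambda _ hY)]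
  rfl

theorem map_shiftSeq_eq_of_map_shiftSeq_one {ν : Measure (ℤ → β)}
    (h : ν.map (shiftSeq 1) = ν) (j : ℤ) : ν.map (shiftSeq j) = ν := by
  have hcomp : ∀ a b : ℤ, (ν.map (shiftSeq b)).map (shiftSeq a) = ν.map (shiftSeq (a + b)) :=
    fun a b => by
      rw [Measure.map_map (measurable_shiftSeq a) (measurable_shiftSeq b), shiftSeq_comp_shiftSeq]
  induction j using Int.induction_on with
  | zero =>
    have : shiftSeq (β := β) 0 = id := by funext u k; simp [shiftSeq]
    rw [this, Measure.map_id]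
  | succ i ih => rw [add_comm, ← hcomp, ih, h]
  | pred i ih => conv_lhs => rw [← h, hcomp, sub_add_cancel, ih]

theorem isStationarySeq_of_map_succ {P : Measure Ω} {Y : ℤ → Ω → β}
    (hY : ∀ k, Measurable (Y k))
    (h : (P.map fun ω k => Y (k + 1) ω) = P.map fun ω k => Y k ω) : IsStationarySeq P Y := by
  rw [isStationarySeq_iff_map_shiftSeq hY]
  refine map_shiftSeq_eq_of_map_shiftSeq_one ?_
  rwa [Measure.map_map (measurable_shiftSeq 1) (measurable_pi_lambda _ hY)]

end Stationarity

section Transport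

open Function

variable {Ω γ β : Type*} {mΩ : MeasurableSpace Ω} [MeasurableSpace γ] [MeasurableSpace β]

theorem IsStationarySeq.of_map {P : Measure Ω} {π : Ω → γ} (hπ : Measurable π)
    {W : ℤ → γ → β} (hW : ∀ k, Measurable (W k)) (h : IsStationarySeq (P.map π) W) :
    IsStationarySeq P fun ℓ ω => W ℓ (π ω) := by
  intro j
  have hj := h j
  rwa [Measure.map_map (measurable_pi_lambda _ fun k => hW (k + j)) hπ,
    Measure.map_map (measurable_pi_lambda _ hW) hπ] at hj

theorem map_cond_preimage (μ : Measure Ω) {f : Ω → γ} (hf : Measurable f) {s : Set γ}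
    (hs : MeasurableSet s) : (μ[|f ⁻¹' s]).map f = (μ.map f)[|s] := by
  rw [ProbabilityTheory.cond, ProbabilityTheory.cond, Measure.map_smul,
    ← Measure.restrict_map hf hs, Measure.map_apply hf hs]

theorem measurePreserving_prodMap_shiftSeq {P : Measure Ω} [IsProbabilityMeasure P]
    {X : ℤ → Ω → γ} {Z : ℤ → Ω → β} (hX : ∀ k, Measurable (X k)) (hZ : ∀ k, Measurable (Z k))
    (hXs : IsStationarySeq P X) (hZs : IsStationarySeq P Z)
    (hXZ : IndepFun (fun ω k => X k ω) (fun ω k => Z k ω) P) (m n : ℤ) :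
    MeasurePreserving (Prod.map (shiftSeq m) (shiftSeq n))
      (P.map fun ω => (fun k => X k ω, fun k => Z k ω))
      (P.map fun ω => (fun k => X k ω, fun k => Z k ω)) := by
  have hX' := measurable_pi_lambda _ hX
  have hZ' := measurable_pi_lambda _ hZ
  refine ⟨(measurable_shiftSeq m).prodMap (measurable_shiftSeq n), ?_⟩
  rw [(indepFun_iff_map_prod_eq_prod_map_map hX'.aemeasurable hZ'.aemeasurable).1 hXZ,
    ← Measure.map_prod_map _ _ (measurable_shiftSeq m) (measurable_shiftSeq n),
    (isStationarySeq_iff_map_shiftSeq hX).1 hXs, (isStationarySeq_iff_map_shiftSeq hZ).1 hZs]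

theorem map_restrict_iUnion_eq {ι : Type*} [Countable ι] {μ : Measure γ} {T : ι → γ → γ}
    (hT : ∀ i, MeasurePreserving (T i) μ μ) {C D : ι → Set γ} (hD : ∀ i, MeasurableSet (D i))
    (hCdisj : Pairwise (Disjoint on C)) (hDdisj : Pairwise (Disjoint on D))
    (hTD : ∀ i, T i ⁻¹' D i = C i) {f g : γ → β} (hf : Measurable f) (hg : Measurable g)
    (hgT : ∀ i, ∀ x ∈ C i, g (T i x) = f x) :
    (μ.restrict (⋃ i, C i)).map f = (μ.restrict (⋃ i, D i)).map g := by
  have hC : ∀ i, MeasurableSet (C i) := fun i => hTD i ▸ (hT i).measurable (hD i)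
  ext s hs
  rw [Measure.map_apply hf hs, Measure.map_apply hg hs,
    Measure.restrict_apply (hf hs), Measure.restrict_apply (hg hs), Set.inter_iUnion,
    Set.inter_iUnion,
    measure_iUnion (fun i j hij => (hCdisj hij).mono Set.inter_subset_right Set.inter_subset_right)
      fun i => (hf hs).inter (hC i),
    measure_iUnion (fun i j hij => (hDdisj hij).mono Set.inter_subset_right Set.inter_subset_right)
      fun i => (hg hs).inter (hD i)]
  refine tsum_congr fun i => ?_
  have hpre : f ⁻¹' s ∩ C i = T i ⁻¹' (g ⁻¹' s ∩ D i) := by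
    ext x
    simp only [Set.mem_inter_iff, Set.mem_preimage, ← hTD i]
    constructor
    · rintro ⟨hx, hxD⟩
      exact ⟨by rwa [hgT i x (hTD i ▸ hxD)], hxD⟩
    · rintro ⟨hx, hxD⟩
      exact ⟨by rwa [← hgT i x (hTD i ▸ hxD)], hxD⟩
  rw [hpre, (hT i).measure_preimage ((hg hs).inter (hD i)).nullMeasurableSet]

end Transport

section PathSpace

variable {E α : Type*} (S R : Set α)

open Classical in
/-- The paper's `X̄`, with `ζ` the enumeration of the `R`-positions of `w.2`. -/
noncomputable def spread [Zero E] (w : (ℤ → E) × (ℤ → α)) (j : ℤ) : E :=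
  if w.2 j ∈ R then w.1 (hitRank (fun i => w.2 i ∈ R) j) else 0

/-- The paper's `(V_ℓ, Ȳ_ℓ)`, with `ξ` the enumeration of the `S`-positions of `w.2`. -/
noncomputable def obsSeq [Zero E] (ℓ : ℤ) (w : (ℤ → E) × (ℤ → α)) : (α × ℤ) × E :=
  ((w.2 (hitEnum (fun i => w.2 i ∈ S) ℓ),
      hitEnum (fun i => w.2 i ∈ S) ℓ - hitEnum (fun i => w.2 i ∈ S) (ℓ - 1)),
    spread R w (hitEnum (fun i => w.2 i ∈ S) ℓ))

/-- The Palm event `Z₀ ∈ S`, cut down to paths on which `hitEnum` is a genuine enumeration. -/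
def anchoredSet : Set ((ℤ → E) × (ℤ → α)) :=
  {w | w.2 0 ∈ S ∧ HitRankSurj fun i => w.2 i ∈ S}

/-- `ξ₁ = n`, and `(0, n]` holds `m` positions in `R`. -/
def nextHitCell (n m : ℤ) : Set ((ℤ → E) × (ℤ → α)) :=
  {w | w ∈ anchoredSet S ∧ w.2 n ∈ S ∧ hitRank (fun i => w.2 i ∈ S) n = 1 ∧
    hitRank (fun i => w.2 i ∈ R) n = m}

/-- `ξ₋₁ = -n`, and `(-n, 0]` holds `m` positions in `R`. -/
def prevHitCell (n m : ℤ) : Set ((ℤ → E) × (ℤ → α)) :=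
  {w | w ∈ anchoredSet S ∧ w.2 (-n) ∈ S ∧ hitRank (fun i => w.2 i ∈ S) (-n) = -1 ∧
    hitRank (fun i => w.2 i ∈ R) (-n) = -m}

variable {S R}

theorem spread_prodMap_shiftSeq [Zero E] {w : (ℤ → E) × (ℤ → α)} {n m : ℤ}
    (hm : hitRank (fun i => w.2 i ∈ R) n = m) (j : ℤ) :
    spread R (Prod.map (shiftSeq m) (shiftSeq n) w) j = spread R w (j + n) := by
  simp only [spread, Prod.map_fst, Prod.map_snd, shiftSeq]
  rw [hitRank_comp_add_right (fun i => w.2 i ∈ R), hm, sub_add_cancel]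
  by_cases h : w.2 (j + n) ∈ R <;> simp [h]

theorem spread_eq_of_enum [Zero E] {x : ℤ → E} {z : ℤ → α} {e : ℤ → ℤ} (he : StrictMono e)
    (he₀ : e 0 ≤ 0) (he₁ : 0 < e 1)
    (hR : ∀ j, z j ∈ R ↔ j ∈ Set.range e) {xbar : ℤ → E} (hxbar : ∀ k, xbar (e k) = x k)
    (hxbar₀ : ∀ j, (∀ k, e k ≠ j) → xbar j = 0) (j : ℤ) : spread R (x, z) j = xbar j := by
  by_cases hj : z j ∈ R
  · obtain ⟨k, rfl⟩ := (hR j).1 hj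
    rw [spread, if_pos hj, hitRank_enum (p := fun i => z i ∈ R) he he₀ he₁ hR, hxbar]
  · rw [spread, if_neg hj, hxbar₀ j fun k hk => hj ((hR j).2 ⟨k, hk⟩)]

theorem obsSeq_prodMap_shiftSeq [Zero E] {w : (ℤ → E) × (ℤ → α)} {n m : ℤ}
    (hw : HitRankSurj fun i => w.2 i ∈ S) (hn : hitRank (fun i => w.2 i ∈ S) n = 1)
    (hm : hitRank (fun i => w.2 i ∈ R) n = m) (ℓ : ℤ) :
    obsSeq S R ℓ (Prod.map (shiftSeq m) (shiftSeq n) w) = obsSeq S R (ℓ + 1) w := by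
  have hξ : ∀ ℓ, hitEnum (fun i => (Prod.map (shiftSeq m) (shiftSeq n) w).2 i ∈ S) ℓ
      = hitEnum (fun i => w.2 i ∈ S) (ℓ + 1) - n := fun ℓ => by
    rw [← hn]
    exact hitEnum_comp_add_right (p := fun i => w.2 i ∈ S) hw n ℓ
  simp only [obsSeq, hξ, spread_prodMap_shiftSeq hm, sub_add_cancel, add_sub_cancel_right,
    sub_sub_sub_cancel_right]
  simp [shiftSeq]

theorem preimage_prodMap_shiftSeq_prevHitCell (n m : ℤ) :
    Prod.map (shiftSeq m) (shiftSeq n) ⁻¹' prevHitCell (E := E) S R n m = nextHitCell S R n m := by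
  ext w
  simp only [prevHitCell, nextHitCell, anchoredSet, Set.mem_preimage, Set.mem_ofPred_eq,
    Prod.map_snd, shiftSeq, neg_add_cancel, zero_add]
  rw [hitRank_comp_add_right (fun i => w.2 i ∈ S), hitRank_comp_add_right (fun i => w.2 i ∈ R),
    hitRankSurj_comp_add_right (p := fun i => w.2 i ∈ S)]
  simp only [neg_add_cancel, hitRank_zero, zero_sub, neg_inj]
  tauto

open Function in
theorem pairwise_disjoint_nextHitCell :
    Pairwise (Disjoint on fun i : ℤ × ℤ => nextHitCell (E := E) S R i.1 i.2) := by
  rintro ⟨n, m⟩ ⟨n', m'⟩ hne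
  refine Set.disjoint_left.2 fun w ⟨_, hn, h1, hm⟩ ⟨_, hn', h1', hm'⟩ => hne ?_
  dsimp only at hn h1 hm hn' h1' hm'
  obtain rfl := hitRank_injOn (fun i => w.2 i ∈ S) hn hn' (h1.trans h1'.symm)
  subst hm hm'
  rfl

open Function in
theorem pairwise_disjoint_prevHitCell :
    Pairwise (Disjoint on fun i : ℤ × ℤ => prevHitCell (E := E) S R i.1 i.2) := by
  rintro ⟨n, m⟩ ⟨n', m'⟩ hne
  refine Set.disjoint_left.2 fun w ⟨_, hn, h1, hm⟩ ⟨_, hn', h1', hm'⟩ => hne ?_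
  dsimp only at hn h1 hm hn' h1' hm'
  obtain rfl : n = n' :=
    neg_inj.1 (hitRank_injOn (fun i => w.2 i ∈ S) hn hn' (h1.trans h1'.symm))
  obtain rfl : m = m' := neg_inj.1 (hm.symm.trans hm')
  rfl

theorem iUnion_nextHitCell : ⋃ i : ℤ × ℤ, nextHitCell (E := E) S R i.1 i.2 = anchoredSet S := by
  refine Set.Subset.antisymm (Set.iUnion_subset fun i w hw => hw.1) fun w hw => ?_
  obtain ⟨j, hj, hj1⟩ := hw.2 1
  exact Set.mem_iUnion.2 ⟨(j, hitRank (fun i => w.2 i ∈ R) j), hw, hj, hj1, rfl⟩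

theorem iUnion_prevHitCell : ⋃ i : ℤ × ℤ, prevHitCell (E := E) S R i.1 i.2 = anchoredSet S := by
  refine Set.Subset.antisymm (Set.iUnion_subset fun i w hw => hw.1) fun w hw => ?_
  obtain ⟨j, hj, hj1⟩ := hw.2 (-1)
  exact Set.mem_iUnion.2 ⟨(-j, -hitRank (fun i => w.2 i ∈ R) j), hw, by simpa, by simpa, by simp⟩

end PathSpace

section Measurability

theorem measurable_of_countable_index {ι γ β : Type*} [Countable ι] [MeasurableSpace ι]
    [MeasurableSingletonClass ι] [MeasurableSpace γ] [MeasurableSpace β] {g : γ → ι}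
    (hg : Measurable g) {F : ι → γ → β} (hF : ∀ k, Measurable (F k)) :
    Measurable fun x => F (g x) x :=
  (measurable_from_prod_countable_right (f := fun q : ι × γ => F q.1 q.2) hF).comp
    (hg.prodMk measurable_id)

variable {E α : Type*} [MeasurableSpace E] [MeasurableSpace α] {S R : Set α}

theorem measurable_hitRank (hS : MeasurableSet S) (j : ℤ) :
    Measurable fun z : ℤ → α => hitRank (fun i => z i ∈ S) j := by
  classical
  have hcount : ∀ a b, Measurable fun z : ℤ → α => (hitCount (fun i => z i ∈ S) a b : ℤ) := by
    intro a b
    simp_rw [hitCount, Finset.natCast_card_filter]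
    exact Finset.measurable_sum _ fun i _ =>
      Measurable.ite (measurable_pi_apply i hS) measurable_const measurable_const
  exact (hcount 0 j).sub (hcount j 0)

theorem measurable_mem_hitRank_eq (hS : MeasurableSet S) (j ℓ : ℤ) :
    Measurable fun z : ℤ → α => z j ∈ S ∧ hitRank (fun i => z i ∈ S) j = ℓ :=
  (hS.mem.comp (measurable_pi_apply j)).and ((measurable_hitRank hS j).eq_const ℓ)

theorem measurable_hitEnum (hS : MeasurableSet S) (ℓ : ℤ) :
    Measurable fun z : ℤ → α => hitEnum (fun i => z i ∈ S) ℓ := by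
  refine measurable_to_countable' fun j => ?_
  simp only [Set.preimage, Set.mem_singleton_iff, hitEnum_eq_iff]
  exact Measurable.setOf <| (measurable_mem_hitRank_eq hS j ℓ).or <|
    measurable_const.and (Measurable.exists fun i => measurable_mem_hitRank_eq hS i ℓ).not

theorem measurable_spread [Zero E] (hR : MeasurableSet R) (j : ℤ) :
    Measurable fun w : (ℤ → E) × (ℤ → α) => spread R w j :=
  Measurable.ite (measurable_snd (measurable_pi_apply j hR))
    (measurable_of_countable_index ((measurable_hitRank hR j).comp measurable_snd)
      fun k => (measurable_pi_apply k).comp measurable_fst)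
    measurable_const

theorem measurable_obsSeq [Zero E] (hS : MeasurableSet S) (hR : MeasurableSet R) (ℓ : ℤ) :
    Measurable (obsSeq (E := E) S R ℓ) := by
  have hξ : ∀ ℓ, Measurable fun w : (ℤ → E) × (ℤ → α) => hitEnum (fun i => w.2 i ∈ S) ℓ :=
    fun ℓ => (measurable_hitEnum hS ℓ).comp measurable_snd
  exact (((measurable_of_countable_index (hξ ℓ) fun k => (measurable_pi_apply k).comp
    measurable_snd).prodMk ((hξ ℓ).sub (hξ (ℓ - 1)))).prodMk
    (measurable_of_countable_index (hξ ℓ) fun k => measurable_spread hR k))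

theorem measurableSet_anchoredSet (hS : MeasurableSet S) :
    MeasurableSet (anchoredSet (E := E) S) :=
  Measurable.setOf <| (hS.mem.comp ((measurable_pi_apply 0).comp measurable_snd)).and <|
    Measurable.forall fun ℓ => Measurable.exists fun j =>
      (measurable_mem_hitRank_eq hS j ℓ).comp measurable_snd

theorem measurableSet_prevHitCell (hS : MeasurableSet S) (hR : MeasurableSet R) (n m : ℤ) :
    MeasurableSet (prevHitCell (E := E) S R n m) :=
  Measurable.setOf <| (measurableSet_anchoredSet hS).mem.and <|
    (hS.mem.comp ((measurable_pi_apply (-n)).comp measurable_snd)).and <|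
      (((measurable_hitRank hS (-n)).comp measurable_snd).eq_const (-1)).and
        (((measurable_hitRank hR (-n)).comp measurable_snd).eq_const (-m))

end Measurability

section Palm

variable {E α : Type*} [MeasurableSpace E] [MeasurableSpace α] [Zero E] {S R : Set α}

theorem map_restrict_anchoredSet_obsSeq_succ (hS : MeasurableSet S) (hR : MeasurableSet R)
    {μ : Measure ((ℤ → E) × (ℤ → α))}
    (hμ : ∀ m n, MeasurePreserving (Prod.map (shiftSeq m) (shiftSeq n)) μ μ) :
    (μ.restrict (anchoredSet S)).map (fun w k => obsSeq S R (k + 1) w) =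
      (μ.restrict (anchoredSet S)).map (fun w k => obsSeq S R k w) := by
  conv_lhs => rw [← iUnion_nextHitCell (R := R)]
  conv_rhs => rw [← iUnion_prevHitCell (R := R)]
  exact map_restrict_iUnion_eq (T := fun i => Prod.map (shiftSeq i.2) (shiftSeq i.1))
    (fun i => hμ _ _) (fun i => measurableSet_prevHitCell hS hR i.1 i.2)
    pairwise_disjoint_nextHitCell pairwise_disjoint_prevHitCell
    (fun i => preimage_prodMap_shiftSeq_prevHitCell i.1 i.2)
    (measurable_pi_lambda _ fun k => measurable_obsSeq hS hR (k + 1))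
    (measurable_pi_lambda _ fun k => measurable_obsSeq hS hR k)
    fun i w hw => funext fun k => obsSeq_prodMap_shiftSeq hw.1.2 hw.2.2.1 hw.2.2.2 k

theorem isStationarySeq_cond_anchoredSet_obsSeq (hS : MeasurableSet S) (hR : MeasurableSet R)
    {μ : Measure ((ℤ → E) × (ℤ → α))}
    (hμ : ∀ m n, MeasurePreserving (Prod.map (shiftSeq m) (shiftSeq n)) μ μ) :
    IsStationarySeq (μ[|anchoredSet S]) (obsSeq (E := E) S R) :=
  isStationarySeq_of_map_succ (measurable_obsSeq hS hR) <| by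
    rw [ProbabilityTheory.cond, Measure.map_smul, Measure.map_smul,
      map_restrict_anchoredSet_obsSeq_succ hS hR hμ]

end Palm

theorem stmt13_general {Ω : Type*} {mΩ : MeasurableSpace Ω} (P : Measure Ω) [IsProbabilityMeasure P]
    (X : ℤ → Ω → ℝ) (hmX : ∀ k, Measurable (X k))
    (hXstat : IsStationarySeq P X)
    (Z : ℤ → Ω → MID) (hmZ : ∀ k, Measurable (Z k)) (hZstat : IsStationarySeq P Z)
    (hindep : IndepFun (fun ω (k : ℤ) => X k ω) (fun ω (k : ℤ) => Z k ω) P)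
    (ζ : ℤ → Ω → ℤ) (hζmono : ∀ ω, StrictMono (ζ · ω))
    (hζ0 : ∀ ω, ζ 0 ω ≤ 0 ∧ 0 < ζ 1 ω)
    (hζrange : ∀ ω j, (Z j ω = MID.M ∨ Z j ω = MID.D) ↔ ∃ k, ζ k ω = j)
    (Xbar : ℤ → Ω → ℝ)
    (hXbar1 : ∀ ω k, Xbar (ζ k ω) ω = X k ω)
    (hXbar2 : ∀ ω j, (∀ k, ζ k ω ≠ j) → Xbar j ω = 0)
    (ξ : ℤ → Ω → ℤ) (hξmono : ∀ ω, StrictMono (ξ · ω))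
    (hξ0 : ∀ ω, ξ 0 ω ≤ 0 ∧ 0 < ξ 1 ω)
    (hξrange : ∀ ω j, (Z j ω = MID.M ∨ Z j ω = MID.I) ↔ ∃ k, ξ k ω = j) :
    IsStationarySeq (P[|{ω | Z 0 ω = MID.M ∨ Z 0 ω = MID.I}])
      (fun ℓ ω => ((Z (ξ ℓ ω) ω, ξ ℓ ω - ξ (ℓ - 1) ω), Xbar (ξ ℓ ω) ω)) := by
  set path : Ω → (ℤ → ℝ) × (ℤ → MID) := fun ω => (fun k => X k ω, fun k => Z k ω)
  have hpath : Measurable path := (measurable_pi_lambda _ hmX).prodMk (measurable_pi_lambda _ hmZ)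
  have hall : ∀ s : Set MID, MeasurableSet s := fun _ => MeasurableSpace.measurableSet_top
  have hξ : ∀ ω ℓ, hitEnum (fun i => (path ω).2 i ∈ ({MID.M, MID.I} : Set MID)) ℓ = ξ ℓ ω :=
    fun ω => hitEnum_enum (hξmono ω) (hξ0 ω).1 (hξ0 ω).2 (hξrange ω)
  have hXbar : ∀ ω j, spread ({MID.M, MID.D} : Set MID) (path ω) j = Xbar j ω := fun ω =>
    spread_eq_of_enum (hζmono ω) (hζ0 ω).1 (hζ0 ω).2 (hζrange ω) (hXbar1 ω) (hXbar2 ω)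
  have hobs : (fun ℓ ω => ((Z (ξ ℓ ω) ω, ξ ℓ ω - ξ (ℓ - 1) ω), Xbar (ξ ℓ ω) ω)) =
      fun ℓ ω => obsSeq {MID.M, MID.I} {MID.M, MID.D} ℓ (path ω) := by
    funext ℓ ω
    simp only [obsSeq, hξ, hXbar]
    rfl
  have hcond : {ω | Z 0 ω = MID.M ∨ Z 0 ω = MID.I} = path ⁻¹' anchoredSet {MID.M, MID.I} := by
    ext ω
    exact (and_iff_left (hitRankSurj_enum (hξmono ω) (hξ0 ω).1 (hξ0 ω).2 (hξrange ω))).symm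
  rw [hobs, hcond]
  refine IsStationarySeq.of_map hpath (measurable_obsSeq (hall _) (hall _)) ?_
  rw [map_cond_preimage P hpath (measurableSet_anchoredSet (hall _))]
  exact isStationarySeq_cond_anchoredSet_obsSeq (hall _) (hall _)
    (measurePreserving_prodMap_shiftSeq hmX hmZ hXstat hZstat hindep)

/-- Lemma 4.3: ((V_ℓ, Ȳ_ℓ), ℓ ∈ ℤ) is strictly stationary under
P₀ = P(·|Z₀ ∈ {M,I}), where V_ℓ = (Z_{ξ(ℓ)}, ξ_ℓ − ξ_{ℓ−1}) and Ȳ_ℓ = X̄_{ξ(ℓ)}. -/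
theorem stmt13 {Ω : Type*} {mΩ : MeasurableSpace Ω} (P : Measure Ω) [IsProbabilityMeasure P]
    (X : ℤ → Ω → ℝ) (hmX : ∀ k, Measurable (X k)) (hXpos : ∀ k ω, 0 < X k ω)
    (hXstat : IsStationarySeq P X)
    (Z : ℤ → Ω → MID) (hmZ : ∀ k, Measurable (Z k)) (hZstat : IsStationarySeq P Z)
    (hZerg : Ergodic (fun f : ℤ → MID => fun k => f (k + 1))
      (P.map (fun ω (k : ℤ) => Z k ω)))
    (hZpos : ∀ s : MID, P {ω | Z 0 ω = s} ≠ 0)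
    (hinf : ∀ ω (s : MID) (n : ℤ), (∃ k > n, Z k ω = s) ∧ (∃ k < n, Z k ω = s))
    (hindep : IndepFun (fun ω (k : ℤ) => X k ω) (fun ω (k : ℤ) => Z k ω) P)
    (ζ : ℤ → Ω → ℤ) (hζmono : ∀ ω, StrictMono (ζ · ω))
    (hζ0 : ∀ ω, ζ 0 ω ≤ 0 ∧ 0 < ζ 1 ω)
    (hζrange : ∀ ω j, (Z j ω = MID.M ∨ Z j ω = MID.D) ↔ ∃ k, ζ k ω = j)
    (Xbar : ℤ → Ω → ℝ)
    (hXbar1 : ∀ ω k, Xbar (ζ k ω) ω = X k ω)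
    (hXbar2 : ∀ ω j, (∀ k, ζ k ω ≠ j) → Xbar j ω = 0)
    (ξ : ℤ → Ω → ℤ) (hξmono : ∀ ω, StrictMono (ξ · ω))
    (hξ0 : ∀ ω, ξ 0 ω ≤ 0 ∧ 0 < ξ 1 ω)
    (hξrange : ∀ ω j, (Z j ω = MID.M ∨ Z j ω = MID.I) ↔ ∃ k, ξ k ω = j) :
    IsStationarySeq (P[|{ω | Z 0 ω = MID.M ∨ Z 0 ω = MID.I}])
      (fun ℓ ω => ((Z (ξ ℓ ω) ω, ξ ℓ ω - ξ (ℓ - 1) ω), Xbar (ξ ℓ ω) ω)) :=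
  stmt13_general (mΩ := mΩ) P X hmX hXstat Z hmZ hZstat hindep ζ hζmono hζ0 hζrange Xbar hXbar1
    hXbar2 ξ hξmono hξ0 hξrange
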